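/- arXiv:2401.16480 — 3 statements merged into one kernel-verified Lean document; each statement's English description precedes it below -/
import Mathlib

section
/- Assume h^x_m = 0 for all sites m (γ, J, μ, h^y, h^z arbitrary) and let H = H_γ + H_J + H_μ + H_h. Then for every 0 ≤ Q ≤ M and every λ ∈ ℂ: λ is an eigenvalue of H restricted to the charge sector W_Q if and only if (∑_{m=1}^{M} μ_m) − λ is an eigenvalue of H restricted to W_{M−Q}. In particular, if μ ≡ 0 then the spectrum of H restricted to W_{M−Q} equals the negative of the spectrum of H restricted to W_Q, and the spectrum of H on all of V_M is symmetric about 0. -/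
open scoped BigOperators

namespace QuantumBreakdown

/-- Basis index: pairs of an occupation configuration and a spin configuration. -/
abbrev Cfg (M : ℕ) := (Fin M → Bool) × (Fin M → Bool)

/-- The Hilbert space `V_M`. -/
abbrev V (M : ℕ) := Cfg M → ℂ

/-- The basis vector `e_{n,s}`. -/
noncomputable def e (M : ℕ) (p : Cfg M) : V M := Pi.single p 1

/-- The linear operator determined by prescribed images of the basis vectors. -/
noncomputable def mkOp (M : ℕ) (f : Cfg M → V M) : V M →ₗ[ℂ] V M :=
  (Pi.basisFun ℂ (Cfg M)).constr ℂ f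

/-- The left site of edge `m`. -/
def sL (M : ℕ) (m : Fin (M - 1)) : Fin M := ⟨m.1, by have := m.2; omega⟩

/-- The right site of edge `m`. -/
def sR (M : ℕ) (m : Fin (M - 1)) : Fin M := ⟨m.1 + 1, by have := m.2; omega⟩

/-- Move a fermion from site `a` to site `b`. -/
def hop (M : ℕ) (n : Fin M → Bool) (a b : Fin M) : Fin M → Bool :=
  Function.update (Function.update n a false) b true

/-- The hopping term `H_γ`. -/
noncomputable def Hgam (M : ℕ) (γ : Fin (M - 1) → ℝ) : V M →ₗ[ℂ] V M :=
  mkOp M fun p =>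
    -∑ m : Fin (M - 1), (γ m : ℂ) •
      ((if p.1 (sL M m) = true ∧ p.1 (sR M m) = false then
          e M (hop M p.1 (sL M m) (sR M m), p.2) else 0)
        +
       (if p.1 (sR M m) = true ∧ p.1 (sL M m) = false then
          e M (hop M p.1 (sR M m) (sL M m), p.2) else 0))

/-- The breakdown interaction `H_J`. -/
noncomputable def HJop (M : ℕ) (J : Fin (M - 1) → ℝ) : V M →ₗ[ℂ] V M :=
  mkOp M fun p =>
    ∑ m : Fin (M - 1), (J m : ℂ) •
      ((if p.1 (sL M m) = true ∧ p.1 (sR M m) = false ∧ p.2 (sR M m) = false then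
          e M (hop M p.1 (sL M m) (sR M m), Function.update p.2 (sR M m) true) else 0)
        +
       (if p.1 (sR M m) = true ∧ p.1 (sL M m) = false ∧ p.2 (sR M m) = true then
          e M (hop M p.1 (sR M m) (sL M m), Function.update p.2 (sR M m) false) else 0))

/-- The on-site potential `H_μ`. -/
noncomputable def Hmu (M : ℕ) (μ : Fin M → ℝ) : V M →ₗ[ℂ] V M :=
  mkOp M fun p => (∑ m : Fin M, if p.1 m = true then (μ m : ℂ) else 0) • e M p

/-- Pauli `σ^x` at site `m`. -/
noncomputable def sigx (M : ℕ) (m : Fin M) : V M →ₗ[ℂ] V M :=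
  mkOp M fun p => e M (p.1, Function.update p.2 m (!p.2 m))

/-- Pauli `σ^y` at site `m`. -/
noncomputable def sigy (M : ℕ) (m : Fin M) : V M →ₗ[ℂ] V M :=
  mkOp M fun p =>
    (if p.2 m = true then Complex.I else -Complex.I) • e M (p.1, Function.update p.2 m (!p.2 m))

/-- Pauli `σ^z` at site `m`. -/
noncomputable def sigz (M : ℕ) (m : Fin M) : V M →ₗ[ℂ] V M :=
  mkOp M fun p => (if p.2 m = true then (1 : ℂ) else -1) • e M p

/-- The magnetic field term `H_h`. -/
noncomputable def Hh (M : ℕ) (hx hy hz : Fin M → ℝ) : V M →ₗ[ℂ] V M :=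
  ∑ m : Fin M, ((hx m : ℂ) • sigx M m + (hy m : ℂ) • sigy M m + (hz m : ℂ) • sigz M m)

/-- Number of occupied sites of an occupation configuration. -/
def nOcc (M : ℕ) (n : Fin M → Bool) : ℕ := (Finset.univ.filter fun m => n m = true).card

/-- The number operator `N`. -/
noncomputable def numOp (M : ℕ) : V M →ₗ[ℂ] V M :=
  mkOp M fun p => (nOcc M p.1 : ℂ) • e M p

/-- The charge-`Q` sector `W_Q`. -/
noncomputable def sector (M Q : ℕ) : Submodule ℂ (V M) :=
  Submodule.span ℂ { v | ∃ p : Cfg M, nOcc M p.1 = Q ∧ v = e M p }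

/-- The charge-`Q` sector with first spin up, `W_Q^↑`. -/
noncomputable def sectorUp (M : ℕ) (hM : 0 < M) (Q : ℕ) : Submodule ℂ (V M) :=
  Submodule.span ℂ { v | ∃ p : Cfg M, nOcc M p.1 = Q ∧ p.2 ⟨0, hM⟩ = true ∧ v = e M p }

end QuantumBreakdown

open QuantumBreakdown

/-!
Particle-hole conjugation `C e_{n,s} = ε(n) e_{n̄,s̄}`, with the staggered sign
`ε(n) = ∏_{m occupied} (-1)^m`, maps `W_Q` to `W_{M-Q}` and is invertible. A nearest-neighbour
hop changes `ε` by a factor `-1`, which makes `C` anticommute with `H_γ` and `H_J`; flipping every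
spin makes it anticommute with `σ^y_m` and `σ^z_m` (but not with `σ^x_m`); and
`C H_μ + H_μ C = (∑_m μ_m) C` because the occupied sites of `n` and `n̄` partition the chain.
Hence `C H = (∑_m μ_m - H) C`, and `C` carries a `λ`-eigenvector in `W_Q` to a
`(∑_m μ_m - λ)`-eigenvector in `W_{M-Q}`.
-/

section AntiCommuting

variable {R E : Type*} [CommRing R] [AddCommGroup E] [Module R E]

theorem Module.End.apply_eq_sub_smul_of_mul_add_mul_eq {C H : Module.End R E} {c : R}
    (hCH : C * H + H * C = c • C) {v : E} {lam : R} (hv : H v = lam • v) :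
    H (C v) = (c - lam) • C v := by
  have h := congrArg (fun A : Module.End R E => A v) hCH
  simp only [LinearMap.add_apply, Module.End.mul_apply, LinearMap.smul_apply, hv,
    map_smul] at h
  rw [sub_smul, ← h]
  abel

theorem Module.End.exists_eigenvector_sub_of_mul_add_mul_eq {C H : Module.End R E} {c : R}
    (hCH : C * H + H * C = c • C) (hC : Function.Injective C) {W W' : Set E}
    (hW : Set.MapsTo C W W') {lam : R} :
    (∃ v ∈ W, v ≠ 0 ∧ H v = lam • v) → ∃ w ∈ W', w ≠ 0 ∧ H w = (c - lam) • w := by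
  rintro ⟨v, hvW, hv0, hv⟩
  exact ⟨C v, hW hvW, (map_ne_zero_iff C hC).2 hv0,
    apply_eq_sub_smul_of_mul_add_mul_eq hCH hv⟩

end AntiCommuting

namespace QuantumBreakdown

variable {M : ℕ}

theorem mkOp_e (f : Cfg M → V M) (p : Cfg M) : mkOp M f (e M p) = f p := by
  rw [mkOp, e, ← Pi.basisFun_apply, Module.Basis.constr_basis]

theorem ext_e {A B : V M →ₗ[ℂ] V M} (h : ∀ p, A (e M p) = B (e M p)) : A = B :=
  (Pi.basisFun ℂ (Cfg M)).ext fun p => by simpa [e] using h p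

theorem sL_ne_sR (m : Fin (M - 1)) : sL M m ≠ sR M m := by
  simp [sL, sR, Fin.ext_iff]

def siteSign (m : Fin M) (b : Bool) : ℂ := if b then (-1) ^ (m : ℕ) else 1

def staggeredSign (n : Fin M → Bool) : ℂ := ∏ m, siteSign m (n m)

theorem staggeredSign_update_mul (n : Fin M → Bool) (a : Fin M) (b : Bool) :
    staggeredSign (Function.update n a b) * siteSign a (n a) =
      staggeredSign n * siteSign a b := by
  have hupd : (fun m => siteSign m (Function.update n a b m)) =
      Function.update (fun m => siteSign m (n m)) a (siteSign a b) := by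
    funext m
    by_cases h : m = a
    · subst h; simp
    · simp [h]
  rw [staggeredSign, staggeredSign, hupd, Finset.prod_update_of_mem (Finset.mem_univ a),
    ← Finset.mul_prod_erase _ _ (Finset.mem_univ a), Finset.sdiff_singleton_eq_erase]
  ring

theorem staggeredSign_hop_mul {n : Fin M → Bool} {a b : Fin M} (hab : a ≠ b)
    (ha : n a = true) (hb : n b = false) :
    staggeredSign (hop M n a b) * (-1) ^ (a : ℕ) = staggeredSign n * (-1) ^ (b : ℕ) := by
  have hvacate := staggeredSign_update_mul n a false
  have hfill := staggeredSign_update_mul (Function.update n a false) b true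
  rw [Function.update_of_ne hab.symm, hb] at hfill
  simp only [siteSign, ha, if_true, if_false, Bool.false_eq_true, mul_one] at hvacate hfill
  rw [hop, hfill, ← hvacate]
  ring

theorem staggeredSign_hop_of_adjacent {n : Fin M → Bool} {a b : Fin M}
    (hadj : (a : ℕ) + 1 = b ∨ (b : ℕ) + 1 = a) (ha : n a = true) (hb : n b = false) :
    staggeredSign (hop M n a b) = -staggeredSign n := by
  have hab : a ≠ b := by rintro rfl; omega
  have h := staggeredSign_hop_mul hab ha hb
  have hpow : ∀ k : ℕ, ((-1 : ℂ) ^ k) ≠ 0 := fun k => pow_ne_zero _ (by norm_num)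
  rcases hadj with hadj | hadj
  · rw [← hadj, pow_succ] at h
    exact mul_right_cancel₀ (hpow a) (by linear_combination h)
  · rw [← hadj, pow_succ] at h
    exact mul_right_cancel₀ (hpow b) (by linear_combination -h)

theorem staggeredSign_mul_not (n : Fin M → Bool) :
    staggeredSign n * staggeredSign (fun m => !n m) = ∏ m : Fin M, (-1 : ℂ) ^ (m : ℕ) := by
  rw [staggeredSign, staggeredSign, ← Finset.prod_mul_distrib]
  refine Finset.prod_congr rfl fun m _ => ?_
  cases n m <;> simp [siteSign]

theorem not_hop (n : Fin M → Bool) {a b : Fin M} (hab : a ≠ b) :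
    (fun m => !hop M n a b m) = hop M (fun m => !n m) b a := by
  funext m
  by_cases hb : m = b
  · subst hb; simp [hop, hab.symm]
  · by_cases ha : m = a
    · subst ha; simp [hop, hb]
    · simp [hop, ha, hb]

theorem not_update (s : Fin M → Bool) (a : Fin M) (b : Bool) :
    (fun m => !Function.update s a b m) = Function.update (fun m => !s m) a (!b) := by
  funext m
  by_cases h : m = a
  · subst h; simp
  · simp [h]

theorem nOcc_not (n : Fin M → Bool) : nOcc M (fun m => !n m) = M - nOcc M n := by
  have h := Finset.card_compl (Finset.univ.filter fun m => n m = true)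
  rw [Finset.compl_filter, Fintype.card_fin] at h
  simpa [nOcc] using h

def conjCfg (p : Cfg M) : Cfg M := (fun m => !p.1 m, fun m => !p.2 m)

theorem conjCfg_conjCfg (p : Cfg M) : conjCfg (conjCfg p) = p := by
  simp [conjCfg]

noncomputable def chargeConj (M : ℕ) : V M →ₗ[ℂ] V M :=
  mkOp M fun p => staggeredSign p.1 • e M (conjCfg p)

theorem chargeConj_e (p : Cfg M) :
    chargeConj M (e M p) = staggeredSign p.1 • e M (conjCfg p) :=
  mkOp_e _ p

theorem chargeConj_mul_self :
    chargeConj M * chargeConj M = (∏ m : Fin M, (-1 : ℂ) ^ (m : ℕ)) • 1 := by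
  refine ext_e fun p => ?_
  rw [Module.End.mul_apply, chargeConj_e, map_smul, chargeConj_e, conjCfg_conjCfg, smul_smul,
    conjCfg, staggeredSign_mul_not]
  rfl

theorem chargeConj_injective : Function.Injective (chargeConj M) := by
  refine Function.LeftInverse.injective (g := (∏ m : Fin M, (-1 : ℂ) ^ (m : ℕ))⁻¹ • chargeConj M)
    fun v => ?_
  have hsq := congrArg (fun A : Module.End ℂ (V M) => A v) chargeConj_mul_self
  have hprod : (∏ m : Fin M, (-1 : ℂ) ^ (m : ℕ)) ≠ 0 :=
    Finset.prod_ne_zero_iff.2 fun m _ => pow_ne_zero _ (by norm_num)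
  simp only [Module.End.mul_apply, LinearMap.smul_apply, Module.End.one_apply] at hsq
  rw [LinearMap.smul_apply, hsq, smul_smul, inv_mul_cancel₀ hprod, one_smul]

theorem chargeConj_mapsTo_sector (Q : ℕ) :
    Set.MapsTo (chargeConj M) (sector M Q) (sector M (M - Q)) := by
  suffices h : sector M Q ≤ (sector M (M - Q)).comap (chargeConj M) from fun v hv => h hv
  refine Submodule.span_le.2 ?_
  rintro _ ⟨p, rfl, rfl⟩
  rw [SetLike.mem_coe, Submodule.mem_comap, chargeConj_e]
  exact Submodule.smul_mem _ _ (Submodule.subset_span ⟨conjCfg p, nOcc_not p.1, rfl⟩)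

theorem chargeConj_anticomm_Hgam (γ : Fin (M - 1) → ℝ) :
    chargeConj M * Hgam M γ + Hgam M γ * chargeConj M = 0 := by
  refine ext_e fun p => ?_
  rw [LinearMap.add_apply, Module.End.mul_apply, Module.End.mul_apply, chargeConj_e, Hgam,
    mkOp_e, map_smul, mkOp_e, LinearMap.zero_apply]
  simp only [map_neg, map_sum, map_smul, map_add, apply_ite (chargeConj M), map_zero,
    chargeConj_e, conjCfg]
  rw [smul_neg, ← neg_add, neg_eq_zero, Finset.smul_sum, ← Finset.sum_add_distrib]
  refine Finset.sum_eq_zero fun m _ => ?_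
  rcases Bool.eq_false_or_eq_true (p.1 (sL M m)) with hL | hL <;>
    rcases Bool.eq_false_or_eq_true (p.1 (sR M m)) with hR | hR <;>
    simp only [hL, hR, Bool.not_true, Bool.not_false, and_self, and_true, and_false, if_true,
      if_false, add_zero, smul_zero, Bool.true_eq_false, Bool.false_eq_true]
  · rw [staggeredSign_hop_of_adjacent (Or.inl rfl) hL hR, not_hop _ (sL_ne_sR m)]
    module
  · rw [staggeredSign_hop_of_adjacent (Or.inr rfl) hR hL, not_hop _ (sL_ne_sR m).symm]
    module

theorem chargeConj_anticomm_HJop (J : Fin (M - 1) → ℝ) :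
    chargeConj M * HJop M J + HJop M J * chargeConj M = 0 := by
  refine ext_e fun p => ?_
  rw [LinearMap.add_apply, Module.End.mul_apply, Module.End.mul_apply, chargeConj_e, HJop,
    mkOp_e, map_smul, mkOp_e, LinearMap.zero_apply]
  simp only [map_sum, map_smul, map_add, apply_ite (chargeConj M), map_zero, chargeConj_e,
    conjCfg]
  rw [Finset.smul_sum, ← Finset.sum_add_distrib]
  refine Finset.sum_eq_zero fun m _ => ?_
  rcases Bool.eq_false_or_eq_true (p.1 (sL M m)) with hL | hL <;>
    rcases Bool.eq_false_or_eq_true (p.1 (sR M m)) with hR | hR <;>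
    rcases Bool.eq_false_or_eq_true (p.2 (sR M m)) with hs | hs <;>
    simp only [hL, hR, hs, Bool.not_true, Bool.not_false, and_self, and_true, and_false,
      if_true, if_false, add_zero, smul_zero, Bool.true_eq_false, Bool.false_eq_true]
  · rw [staggeredSign_hop_of_adjacent (Or.inl rfl) hL hR, not_hop _ (sL_ne_sR m), not_update,
      Bool.not_true]
    module
  · rw [staggeredSign_hop_of_adjacent (Or.inr rfl) hR hL, not_hop _ (sL_ne_sR m).symm,
      not_update, Bool.not_false]
    module

theorem chargeConj_anticomm_sigy (m : Fin M) :
    chargeConj M * sigy M m + sigy M m * chargeConj M = 0 := by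
  refine ext_e fun p => ?_
  rw [LinearMap.add_apply, Module.End.mul_apply, Module.End.mul_apply, chargeConj_e, sigy,
    mkOp_e, map_smul, map_smul, mkOp_e, chargeConj_e, LinearMap.zero_apply]
  cases hs : p.2 m <;>
  · simp only [conjCfg, not_update, hs, Bool.not_true, Bool.not_false, if_true,
      if_false, Bool.false_eq_true]
    module

theorem chargeConj_anticomm_sigz (m : Fin M) :
    chargeConj M * sigz M m + sigz M m * chargeConj M = 0 := by
  refine ext_e fun p => ?_
  rw [LinearMap.add_apply, Module.End.mul_apply, Module.End.mul_apply, chargeConj_e, sigz,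
    mkOp_e, map_smul, map_smul, mkOp_e, chargeConj_e, LinearMap.zero_apply]
  cases hs : p.2 m <;>
  · simp only [conjCfg, hs, Bool.not_true, Bool.not_false, if_true, if_false, Bool.false_eq_true]
    module

theorem chargeConj_anticomm_Hh (hy hz : Fin M → ℝ) :
    chargeConj M * Hh M 0 hy hz + Hh M 0 hy hz * chargeConj M = 0 := by
  simp only [Hh, Pi.zero_apply, Complex.ofReal_zero, zero_smul, zero_add, Finset.mul_sum,
    Finset.sum_mul, ← Finset.sum_add_distrib, mul_add, add_mul, mul_smul_comm, smul_mul_assoc]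
  refine Finset.sum_eq_zero fun m _ => ?_
  rw [add_add_add_comm, ← smul_add, ← smul_add, chargeConj_anticomm_sigy,
    chargeConj_anticomm_sigz, smul_zero, smul_zero, add_zero]

theorem chargeConj_anticomm_Hmu (μ : Fin M → ℝ) :
    chargeConj M * Hmu M μ + Hmu M μ * chargeConj M = ((∑ m, μ m : ℝ) : ℂ) • chargeConj M := by
  refine ext_e fun p => ?_
  rw [LinearMap.add_apply, Module.End.mul_apply, Module.End.mul_apply, chargeConj_e, Hmu,
    mkOp_e, map_smul, map_smul, mkOp_e, chargeConj_e, LinearMap.smul_apply, chargeConj_e]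
  have hsplit : (∑ m, if p.1 m = true then (μ m : ℂ) else 0) +
      (∑ m, if (!p.1 m) = true then (μ m : ℂ) else 0) = ((∑ m, μ m : ℝ) : ℂ) := by
    rw [Complex.ofReal_sum, ← Finset.sum_add_distrib]
    refine Finset.sum_congr rfl fun m _ => ?_
    cases p.1 m <;> simp
  rw [← hsplit, conjCfg]
  module

theorem chargeConj_anticomm_hamiltonian (γ J : Fin (M - 1) → ℝ) (μ hy hz : Fin M → ℝ) :
    chargeConj M * (Hgam M γ + HJop M J + Hmu M μ + Hh M 0 hy hz) +
        (Hgam M γ + HJop M J + Hmu M μ + Hh M 0 hy hz) * chargeConj M =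
      ((∑ m, μ m : ℝ) : ℂ) • chargeConj M := by
  have hγ := chargeConj_anticomm_Hgam (M := M) γ
  have hJ := chargeConj_anticomm_HJop (M := M) J
  have hμ := chargeConj_anticomm_Hmu μ
  have hh := chargeConj_anticomm_Hh hy hz
  simp only [mul_add, add_mul]
  linear_combination (norm := abel) hγ + hJ + hμ + hh

end QuantumBreakdown

theorem charge_conjugation_spectrum_general (M : ℕ)
    (γ J : Fin (M - 1) → ℝ) (μ : Fin M → ℝ) (hx hy hz : Fin M → ℝ)
    (hhx : ∀ m, hx m = 0) :
    let H : V M →ₗ[ℂ] V M := Hgam M γ + HJop M J + Hmu M μ + Hh M hx hy hz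
    (∀ Q ≤ M, ∀ lam : ℂ,
        (∃ v ∈ sector M Q, v ≠ 0 ∧ H v = lam • v) ↔
        (∃ w ∈ sector M (M - Q), w ≠ 0 ∧ H w = (((∑ m : Fin M, μ m : ℝ) : ℂ) - lam) • w))
    ∧ ((∀ m, μ m = 0) → ∀ lam : ℂ,
        (∃ v : V M, v ≠ 0 ∧ H v = lam • v) ↔ (∃ w : V M, w ≠ 0 ∧ H w = (-lam) • w)) := by
  obtain rfl : hx = 0 := funext hhx
  intro H
  have hCH := chargeConj_anticomm_hamiltonian γ J μ hy hz
  refine ⟨fun Q hQ lam => ⟨Module.End.exists_eigenvector_sub_of_mul_add_mul_eq hCH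
    chargeConj_injective (chargeConj_mapsTo_sector Q), fun hw => ?_⟩, fun hμ lam => ?_⟩
  · have hv := Module.End.exists_eigenvector_sub_of_mul_add_mul_eq hCH chargeConj_injective
      (chargeConj_mapsTo_sector (M - Q)) hw
    rwa [Nat.sub_sub_self hQ, sub_sub_cancel] at hv
  · have hsum : ((∑ m, μ m : ℝ) : ℂ) = 0 := by simp [hμ]
    rw [hsum] at hCH
    have transfer := fun lam => Module.End.exists_eigenvector_sub_of_mul_add_mul_eq hCH
      chargeConj_injective (Set.mapsTo_univ _ Set.univ) (lam := lam)
    constructor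
    · simpa only [Set.mem_univ, true_and, zero_sub] using transfer lam
    · simpa only [Set.mem_univ, true_and, zero_sub, neg_neg] using transfer (-lam)

/-- with `h^x ≡ 0`, `λ` is an eigenvalue of `H = H_γ + H_J + H_μ + H_h`
restricted to the charge sector `W_Q` iff `(∑_m μ_m) − λ` is an eigenvalue of `H`
restricted to `W_{M−Q}`; in particular for `μ ≡ 0` the spectrum of `H` is symmetric
about `0`. -/
theorem charge_conjugation_spectrum (M : ℕ) (hM : 2 ≤ M)
    (γ J : Fin (M - 1) → ℝ) (μ : Fin M → ℝ) (hx hy hz : Fin M → ℝ)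
    (hhx : ∀ m, hx m = 0) :
    let H : V M →ₗ[ℂ] V M := Hgam M γ + HJop M J + Hmu M μ + Hh M hx hy hz
    (∀ Q ≤ M, ∀ lam : ℂ,
        (∃ v ∈ sector M Q, v ≠ 0 ∧ H v = lam • v) ↔
        (∃ w ∈ sector M (M - Q), w ≠ 0 ∧ H w = (((∑ m : Fin M, μ m : ℝ) : ℂ) - lam) • w))
    ∧ ((∀ m, μ m = 0) → ∀ lam : ℂ,
        (∃ v : V M, v ≠ 0 ∧ H v = lam • v) ↔ (∃ w : V M, w ≠ 0 ∧ H w = (-lam) • w)) :=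
  charge_conjugation_spectrum_general M γ J μ hx hy hz hhx
end

section
/- Let H = H_J + H_μ + H_{h^z} (the extended quantum breakdown model with no hopping, γ ≡ 0, and magnetic field along z). For α ∈ ℂ define the diagonal operator Q^{exp}(α) on V_M by Q^{exp}(α) e_{n,s} = (∑_{m=1}^{M} (α^m [n_m=1] + α^{m−1}(1−α)[s_m=1])) e_{n,s}. Then [H, Q^{exp}(α)] = 0 for every α ∈ ℂ; that is, the no-hopping breakdown model possesses the one-parameter family of conserved charges Q^{exp}(α). -/
open scoped BigOperators

open QuantumBreakdown

/-- The conserved charge `Q^{exp}(α)` of the no-hopping breakdown model: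
`Q^{exp}(α) e_{n,s} = (∑_{m=1}^{M} (α^m [n_m=1] + α^{m−1}(1−α)[s_m=1])) e_{n,s}`
(site `m` corresponds to the `Fin M` index `m−1`). -/
noncomputable def Qexp (M : ℕ) (α : ℂ) : V M →ₗ[ℂ] V M :=
  mkOp M fun p =>
    (∑ m : Fin M,
      (α ^ (m.1 + 1) * (if p.1 m = true then 1 else 0)
        + α ^ m.1 * (1 - α) * (if p.2 m = true then 1 else 0))) • e M p

noncomputable def qval (M : ℕ) (α : ℂ) (p : Cfg M) : ℂ :=
  ∑ m : Fin M,
    (α ^ (m.1 + 1) * (if p.1 m = true then 1 else 0)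
      + α ^ m.1 * (1 - α) * (if p.2 m = true then 1 else 0))

lemma mkOp_apply_e (M : ℕ) (f : Cfg M → V M) (p : Cfg M) :
    mkOp M f (e M p) = f p := by
  have h : e M p = Pi.basisFun ℂ (Cfg M) p := by
    simp [e, Pi.basisFun_apply]
  rw [h, mkOp, Module.Basis.constr_basis]

lemma Qexp_apply_e (M : ℕ) (α : ℂ) (p : Cfg M) :
    Qexp M α (e M p) = qval M α p • e M p := by
  rw [Qexp, mkOp_apply_e]; rfl

lemma sum_two_update {ι : Type*} [Fintype ι] [DecidableEq ι]
    (f : ι → ℂ) (a b : ι) (hab : a ≠ b) (x y : ℂ) :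
    ∑ m, Function.update (Function.update f a x) b y m
      = ∑ m, f m - f a - f b + x + y := by
  rw [Finset.sum_update_of_mem (Finset.mem_univ b),
    Finset.sum_update_of_mem (by simp [hab] : a ∈ Finset.univ \ {b})]
  have h1 : (Finset.univ \ {b} : Finset ι) \ {a}
      = (Finset.univ.erase b).erase a := by
    simp [Finset.sdiff_singleton_eq_erase]
  rw [h1, Finset.sum_erase_eq_sub (by simp [hab] : a ∈ Finset.univ.erase b),
    Finset.sum_erase_eq_sub (Finset.mem_univ b)]
  ring

lemma qval_hop_fwd (M : ℕ) (α : ℂ) (n s : Fin M → Bool) (a b : Fin M)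
    (hba : b.1 = a.1 + 1) (hna : n a = true) (hnb : n b = false)
    (hsb : s b = false) :
    qval M α (hop M n a b, Function.update s b true) = qval M α (n, s) := by
  have hab : a ≠ b := by intro h; rw [h] at hba; omega
  unfold qval hop
  have key : (fun m : Fin M =>
      α ^ (m.1 + 1) * (if Function.update (Function.update n a false) b true m = true then 1 else 0)
        + α ^ m.1 * (1 - α) * (if Function.update s b true m = true then 1 else 0))
    = Function.update (Function.update (fun m : Fin M =>
        α ^ (m.1 + 1) * (if n m = true then 1 else 0)
          + α ^ m.1 * (1 - α) * (if s m = true then 1 else 0))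
        a (α ^ (a.1 + 1) * 0 + α ^ a.1 * (1 - α) * (if s a = true then 1 else 0)))
        b (α ^ (b.1 + 1) * 1 + α ^ b.1 * (1 - α) * 1) := by
    funext m
    by_cases hmb : m = b
    · subst hmb; simp
    · by_cases hma : m = a
      · subst hma; simp [Function.update_of_ne hmb, hab]
      · simp [Function.update_of_ne hmb, Function.update_of_ne hma]
  rw [key, sum_two_update _ a b hab]
  simp only [hna, hnb, hsb, hba, Bool.false_eq_true, if_true, if_false]
  ring

lemma qval_hop_bwd (M : ℕ) (α : ℂ) (n s : Fin M → Bool) (a b : Fin M)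
    (hab' : a.1 = b.1 + 1) (hna : n a = true) (hnb : n b = false)
    (hsa : s a = true) :
    qval M α (hop M n a b, Function.update s a false) = qval M α (n, s) := by
  have hab : a ≠ b := by intro h; rw [h] at hab'; omega
  unfold qval hop
  have key : (fun m : Fin M =>
      α ^ (m.1 + 1) * (if Function.update (Function.update n a false) b true m = true then 1 else 0)
        + α ^ m.1 * (1 - α) * (if Function.update s a false m = true then 1 else 0))
    = Function.update (Function.update (fun m : Fin M =>
        α ^ (m.1 + 1) * (if n m = true then 1 else 0)
          + α ^ m.1 * (1 - α) * (if s m = true then 1 else 0))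
        a (α ^ (a.1 + 1) * 0 + α ^ a.1 * (1 - α) * 0))
        b (α ^ (b.1 + 1) * 1 + α ^ b.1 * (1 - α) * (if s b = true then 1 else 0)) := by
    funext m
    by_cases hmb : m = b
    · subst hmb; simp [Function.update_of_ne (Ne.symm hab)]
    · by_cases hma : m = a
      · subst hma; simp [Function.update_of_ne hmb, hab]
      · simp [Function.update_of_ne hmb, Function.update_of_ne hma]
  rw [key, sum_two_update _ a b hab]
  simp only [hna, hnb, hsa, hab', Bool.false_eq_true, if_true, if_false]
  ring

lemma Qexp_preserves (M : ℕ) (α : ℂ) (p : Cfg M) (m : Fin (M - 1)) :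
    Qexp M α
      ((if p.1 (sL M m) = true ∧ p.1 (sR M m) = false ∧ p.2 (sR M m) = false then
          e M (hop M p.1 (sL M m) (sR M m), Function.update p.2 (sR M m) true) else 0)
        +
       (if p.1 (sR M m) = true ∧ p.1 (sL M m) = false ∧ p.2 (sR M m) = true then
          e M (hop M p.1 (sR M m) (sL M m), Function.update p.2 (sR M m) false) else 0))
    = qval M α p •
      ((if p.1 (sL M m) = true ∧ p.1 (sR M m) = false ∧ p.2 (sR M m) = false then
          e M (hop M p.1 (sL M m) (sR M m), Function.update p.2 (sR M m) true) else 0)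
        +
       (if p.1 (sR M m) = true ∧ p.1 (sL M m) = false ∧ p.2 (sR M m) = true then
          e M (hop M p.1 (sR M m) (sL M m), Function.update p.2 (sR M m) false) else 0)) := by
  rw [map_add, smul_add]
  congr 1
  · split_ifs with h
    · rw [Qexp_apply_e, qval_hop_fwd M α p.1 p.2 (sL M m) (sR M m) rfl h.1 h.2.1 h.2.2]
    · simp
  · split_ifs with h
    · rw [Qexp_apply_e, qval_hop_bwd M α p.1 p.2 (sR M m) (sL M m) rfl h.1 h.2.1 h.2.2]
    · simp

/-- the no-hopping breakdown model `H = H_J + H_μ + H_{h^z}`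
commutes with `Q^{exp}(α)` for every `α ∈ ℂ`. -/
theorem Qexp_conserved (M : ℕ) (hM : 2 ≤ M)
    (J : Fin (M - 1) → ℝ) (μ : Fin M → ℝ) (hz : Fin M → ℝ) :
    ∀ α : ℂ,
      (HJop M J + Hmu M μ + ∑ m : Fin M, (hz m : ℂ) • sigz M m) ∘ₗ Qexp M α
        = Qexp M α ∘ₗ (HJop M J + Hmu M μ + ∑ m : Fin M, (hz m : ℂ) • sigz M m) := by
  intro α
  apply (Pi.basisFun ℂ (Cfg M)).ext
  intro p
  have hb : (Pi.basisFun ℂ (Cfg M)) p = e M p := by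
    simp [e, Pi.basisFun_apply]
  rw [LinearMap.comp_apply, LinearMap.comp_apply, hb, Qexp_apply_e, map_smul]
  -- reduce to : qval • H (e p) = Qexp (H (e p))
  rw [LinearMap.add_apply, LinearMap.add_apply, map_add, map_add, smul_add, smul_add]
  congr 1
  congr 1
  · -- HJ part
    rw [HJop, mkOp_apply_e, map_sum, Finset.smul_sum]
    refine Finset.sum_congr rfl fun m _ => ?_
    rw [map_smul, Qexp_preserves, smul_comm]
  · -- Hmu part
    rw [Hmu, mkOp_apply_e, map_smul, Qexp_apply_e, smul_comm]
  · -- sigz part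
    rw [LinearMap.sum_apply, map_sum, Finset.smul_sum]
    refine Finset.sum_congr rfl fun m _ => ?_
    rw [LinearMap.smul_apply, sigz, mkOp_apply_e, map_smul, map_smul, Qexp_apply_e]
    simp only [smul_smul]
    ring_nf
end

section
/- Let H = H_J + H_μ + H_{h^z}. Let e_{n,s} be a basis vector such that for some site b one has n_m = 0 for all m ≥ b and s_b = 1, and set Q = |{m : n_m = 1}|. Then the Krylov subspace span{H^k e_{n,s} : k ∈ ℕ} has dimension at most binomial(b−1, Q)·2^{b−1}. In particular, whenever binomial(b−1,Q)·2^{b−1} < binomial(M,Q)·2^{M}, this Krylov subspace is a proper subspace of the charge sector W_Q, so the state e_{n,s} can never explore its full symmetry sector under the dynamics. -/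
open scoped BigOperators

/-! The blockade: a fermion can only reach site `b` by hopping from `b - 1`, which requires the
spin at `b` to be down and flips it up. With `s b = true` and no fermion at or beyond `b`, that hop
is forbidden, so occupations and spins at sites `≥ b` are frozen and every `H^k e_{n,s}` lies in the
span of the configurations that agree with `(n, s)` there. These are determined by their `Q`
occupied sites and their spins among the `b` sites before `b`, so there are at most
`binom(b, Q) 2^b` of them, while the charge sector has dimension `binom(M, Q) 2^M`. -/

theorem Submodule.span_range_pow_apply_le {R E : Type*} [Semiring R] [AddCommMonoid E]
    [Module R E] (f : Module.End R E) {p : Submodule R E} (hf : p ≤ p.comap f) {v : E}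
    (hv : v ∈ p) : Submodule.span R (Set.range fun k : ℕ => (f ^ k) v) ≤ p := by
  refine Submodule.span_le.2 (Set.range_subset_iff.2 fun k => ?_)
  induction k with
  | zero => simpa using hv
  | succ k ih =>
    simpa only [pow_succ', Module.End.mul_apply, SetLike.mem_coe] using Submodule.mem_comap.1 (hf ih)

theorem Fin.eq_of_comp_castLE_eq {M k : ℕ} (h : k ≤ M) {α : Type*} {f g : Fin M → α}
    (hlow : f ∘ Fin.castLE h = g ∘ Fin.castLE h) (hhigh : ∀ m : Fin M, k ≤ m.1 → f m = g m) :
    f = g := by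
  funext m
  by_cases hm : m.1 < k
  · exact congrFun hlow ⟨m.1, hm⟩
  · exact hhigh m (not_lt.1 hm)

namespace QuantumBreakdown

theorem e_eq_basisFun (M : ℕ) (p : Cfg M) : e M p = Pi.basisFun ℂ (Cfg M) p := by
  simp [e, Pi.basisFun_apply]

theorem mkOp_apply_e (M : ℕ) (f : Cfg M → V M) (p : Cfg M) : mkOp M f (e M p) = f p := by
  rw [e_eq_basisFun, mkOp, Module.Basis.constr_basis]

theorem hop_apply_of_ne {M : ℕ} (n : Fin M → Bool) {a c m : Fin M} (ha : m ≠ a) (hc : m ≠ c) :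
    hop M n a c m = n m := by
  rw [hop, Function.update_of_ne hc, Function.update_of_ne ha]

theorem sL_lt_sR {M : ℕ} (m : Fin (M - 1)) : sL M m < sR M m := by
  simp [Fin.lt_def, sL, sR]

theorem nOcc_hop {M : ℕ} (n : Fin M → Bool) {a c : Fin M} (hac : a ≠ c)
    (ha : n a = true) (hc : n c = false) : nOcc M (hop M n a c) = nOcc M n := by
  have hfilter : (Finset.univ.filter fun m => hop M n a c m = true)
      = insert c ((Finset.univ.filter fun m => n m = true).erase a) := by
    ext m
    by_cases hmc : m = c <;> by_cases hma : m = a <;> simp_all [hop, Function.update_apply]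
  have hpos : 0 < (Finset.univ.filter fun m => n m = true).card :=
    Finset.card_pos.2 ⟨a, by simp [ha]⟩
  rw [nOcc, nOcc, hfilter, Finset.card_insert_of_notMem (by simp [hc]),
    Finset.card_erase_of_mem (by simp [ha])]
  omega

theorem nOcc_comp_castLE {M k : ℕ} (h : k ≤ M) {n : Fin M → Bool}
    (hn : ∀ m : Fin M, k ≤ m.1 → n m = false) : nOcc k (n ∘ Fin.castLE h) = nOcc M n := by
  have hfilter : (Finset.univ.filter fun m => n m = true)
      = (Finset.univ.filter fun i => (n ∘ Fin.castLE h) i = true).map (Fin.castLEEmb h) := by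
    ext m
    simp only [Finset.mem_filter, Finset.mem_univ, true_and, Finset.mem_map, Function.comp_apply,
      Fin.castLEEmb_apply]
    refine ⟨fun hm => ⟨⟨m.1, ?_⟩, hm, rfl⟩, ?_⟩
    · by_contra hk
      simp [hn m (not_lt.1 hk)] at hm
    · rintro ⟨i, hi, rfl⟩
      exact hi
  rw [nOcc, nOcc, hfilter, Finset.card_map]

theorem card_nOcc_eq (N Q : ℕ) :
    Fintype.card {n : Fin N → Bool // nOcc N n = Q} = N.choose Q := by
  let toFinset : {n : Fin N → Bool // nOcc N n = Q} ≃ {t : Finset (Fin N) // t.card = Q} :=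
    { toFun := fun n => ⟨Finset.univ.filter fun m => n.1 m = true, n.2⟩
      invFun := fun t => ⟨fun m => decide (m ∈ t.1), by simpa [nOcc] using t.2⟩
      left_inv := fun n => by ext m; simp
      right_inv := fun t => by ext m; simp }
  rw [Fintype.card_congr toFinset, Fintype.card_finset_len, Fintype.card_fin]

theorem finrank_sector (M Q : ℕ) : Module.finrank ℂ (sector M Q) = M.choose Q * 2 ^ M := by
  have hspan : sector M Q
      = Submodule.span ℂ (Set.range fun p : {p : Cfg M // nOcc M p.1 = Q} => e M p) := by
    rw [sector]
    congr 1
    ext v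
    simp [eq_comm]
  have hli : LinearIndependent ℂ fun p : {p : Cfg M // nOcc M p.1 = Q} => e M p := by
    simpa only [e_eq_basisFun, Function.comp_def] using
      (Pi.basisFun ℂ (Cfg M)).linearIndependent.comp Subtype.val Subtype.val_injective
  rw [hspan, finrank_span_eq_card hli,
    Fintype.card_congr (Equiv.prodSubtypeFstEquivSubtypeProd (p := fun n => nOcc M n = Q)),
    Fintype.card_prod, card_nOcc_eq, Fintype.card_fun, Fintype.card_bool, Fintype.card_fin]

def blockadeCfgs (M : ℕ) (b : Fin M) (s : Fin M → Bool) (Q : ℕ) : Set (Cfg M) :=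
  {p | (∀ m, b ≤ m → p.1 m = false) ∧ (∀ m, b ≤ m → p.2 m = s m) ∧ nOcc M p.1 = Q}

noncomputable def blockadeSpace (M : ℕ) (b : Fin M) (s : Fin M → Bool) (Q : ℕ) :
    Submodule ℂ (V M) :=
  Submodule.span ℂ (Set.range fun p : blockadeCfgs M b s Q => e M p)

section Blockade

variable {M : ℕ} {b : Fin M} {s : Fin M → Bool} {Q : ℕ}

theorem e_mem_blockadeSpace {p : Cfg M} (hp : p ∈ blockadeCfgs M b s Q) :
    e M p ∈ blockadeSpace M b s Q :=
  Submodule.subset_span ⟨⟨p, hp⟩, rfl⟩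

theorem blockadeSpace_le_sector : blockadeSpace M b s Q ≤ sector M Q :=
  Submodule.span_le.2 <| Set.range_subset_iff.2 fun p => Submodule.subset_span ⟨p, p.2.2.2, rfl⟩

theorem card_blockadeCfgs_le : Nat.card (blockadeCfgs M b s Q) ≤ b.1.choose Q * 2 ^ b.1 := by
  let restrict (f : Fin M → Bool) : Fin b.1 → Bool := f ∘ Fin.castLE b.2.le
  let Φ : blockadeCfgs M b s Q → {n : Fin b.1 → Bool // nOcc b.1 n = Q} × (Fin b.1 → Bool) :=
    fun p => (⟨restrict p.1.1, (nOcc_comp_castLE _ p.2.1).trans p.2.2.2⟩, restrict p.1.2)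
  have hΦ : Function.Injective Φ := by
    rintro ⟨p, hp⟩ ⟨q, hq⟩ hpq
    simp only [Φ, Prod.mk.injEq, Subtype.mk.injEq] at hpq
    refine Subtype.ext (Prod.ext ?_ ?_)
    · exact Fin.eq_of_comp_castLE_eq _ hpq.1 fun m hm => (hp.1 m hm).trans (hq.1 m hm).symm
    · exact Fin.eq_of_comp_castLE_eq _ hpq.2 fun m hm => (hp.2.1 m hm).trans (hq.2.1 m hm).symm
  calc Nat.card (blockadeCfgs M b s Q)
      ≤ Nat.card ({n : Fin b.1 → Bool // nOcc b.1 n = Q} × (Fin b.1 → Bool)) :=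
        Nat.card_le_card_of_injective Φ hΦ
    _ = b.1.choose Q * 2 ^ b.1 := by
        simp [Nat.card_eq_fintype_card, card_nOcc_eq]

theorem lt_of_mem_blockadeCfgs {p : Cfg M} (hp : p ∈ blockadeCfgs M b s Q) {a : Fin M}
    (ha : p.1 a = true) : a < b :=
  lt_of_not_ge fun hba => by simp [hp.1 a hba] at ha

theorem hop_mem_blockadeCfgs {p : Cfg M} (hp : p ∈ blockadeCfgs M b s Q) {a c : Fin M}
    (hac : a ≠ c) (ha : p.1 a = true) (hc : p.1 c = false) (hcb : c < b) {t : Fin M → Bool}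
    (ht : ∀ m, b ≤ m → t m = p.2 m) : (hop M p.1 a c, t) ∈ blockadeCfgs M b s Q := by
  have hab := lt_of_mem_blockadeCfgs hp ha
  refine ⟨fun m hm => ?_, fun m hm => (ht m hm).trans (hp.2.1 m hm),
    (nOcc_hop _ hac ha hc).trans hp.2.2⟩
  exact (hop_apply_of_ne _ (hab.trans_le hm).ne' (hcb.trans_le hm).ne').trans (hp.1 m hm)

theorem HJop_apply_e_mem (J : Fin (M - 1) → ℝ) (hs : s b = true) {p : Cfg M}
    (hp : p ∈ blockadeCfgs M b s Q) : HJop M J (e M p) ∈ blockadeSpace M b s Q := by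
  rw [HJop, mkOp_apply_e]
  refine Submodule.sum_mem _ fun m _ => Submodule.smul_mem _ _ (Submodule.add_mem _ ?_ ?_)
  · split_ifs with h
    · obtain ⟨hL, hR, hspin⟩ := h
      have hRb : sR M m < b := by
        have hLb := lt_of_mem_blockadeCfgs hp hL
        have hRle : sR M m ≤ b := by
          simp only [Fin.le_def, Fin.lt_def, sL, sR] at hLb ⊢
          omega
        -- the up spin at `b` blocks the hop onto `b`
        exact hRle.lt_of_ne fun h => by simp [h, hp.2.1 b le_rfl, hs] at hspin
      exact e_mem_blockadeSpace <| hop_mem_blockadeCfgs hp (sL_lt_sR m).ne hL hR hRb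
        fun k hk => Function.update_of_ne (hRb.trans_le hk).ne' _ _
    · exact Submodule.zero_mem _
  · split_ifs with h
    · obtain ⟨hR, hL, -⟩ := h
      have hRb := lt_of_mem_blockadeCfgs hp hR
      exact e_mem_blockadeSpace <| hop_mem_blockadeCfgs hp (sL_lt_sR m).ne' hR hL
        ((sL_lt_sR m).trans hRb) fun k hk => Function.update_of_ne (hRb.trans_le hk).ne' _ _
    · exact Submodule.zero_mem _

theorem blockadeSpace_le_comap (J : Fin (M - 1) → ℝ) (μ : Fin M → ℝ) (hz : Fin M → ℝ)
    (hs : s b = true) : blockadeSpace M b s Q ≤ (blockadeSpace M b s Q).comap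
      (HJop M J + Hmu M μ + ∑ m : Fin M, (hz m : ℂ) • sigz M m) := by
  refine Submodule.span_le.2 (Set.range_subset_iff.2 fun ⟨p, hp⟩ => ?_)
  simp only [SetLike.mem_coe, Submodule.mem_comap, LinearMap.add_apply, LinearMap.sum_apply,
    LinearMap.smul_apply]
  refine Submodule.add_mem _ (Submodule.add_mem _ (HJop_apply_e_mem J hs hp) ?_)
    (Submodule.sum_mem _ fun m _ => Submodule.smul_mem _ _ ?_)
  · rw [Hmu, mkOp_apply_e]
    exact Submodule.smul_mem _ _ (e_mem_blockadeSpace hp)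
  · rw [sigz, mkOp_apply_e]
    exact Submodule.smul_mem _ _ (e_mem_blockadeSpace hp)

theorem finrank_blockadeSpace_le :
    Module.finrank ℂ (blockadeSpace M b s Q) ≤ b.1.choose Q * 2 ^ b.1 := by
  have : Fintype (blockadeCfgs M b s Q) := Fintype.ofFinite _
  calc Module.finrank ℂ (blockadeSpace M b s Q) ≤ Fintype.card (blockadeCfgs M b s Q) :=
        finrank_range_le_card _
    _ = Nat.card (blockadeCfgs M b s Q) := Nat.card_eq_fintype_card.symm
    _ ≤ _ := card_blockadeCfgs_le

end Blockade

end QuantumBreakdown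

open QuantumBreakdown

theorem blockade_krylov_bound_general (M : ℕ)
    (J : Fin (M - 1) → ℝ) (μ : Fin M → ℝ) (hz : Fin M → ℝ)
    (n s : Fin M → Bool) (b : Fin M)
    (hn : ∀ m, b ≤ m → n m = false) (hs : s b = true) :
    let H : V M →ₗ[ℂ] V M := HJop M J + Hmu M μ + ∑ m : Fin M, (hz m : ℂ) • sigz M m
    let Q : ℕ := nOcc M n
    Module.finrank ℂ
        ↥(Submodule.span ℂ (Set.range fun k : ℕ => (H ^ k) (e M (n, s))))
      ≤ Nat.choose b.1 Q * 2 ^ b.1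
    ∧ (Nat.choose b.1 Q * 2 ^ b.1 < Nat.choose M Q * 2 ^ M →
        Submodule.span ℂ (Set.range fun k : ℕ => (H ^ k) (e M (n, s))) < sector M Q) := by
  intro H Q
  have hK : Submodule.span ℂ (Set.range fun k : ℕ => (H ^ k) (e M (n, s)))
      ≤ blockadeSpace M b s Q :=
    Submodule.span_range_pow_apply_le H (blockadeSpace_le_comap J μ hz hs)
      (e_mem_blockadeSpace ⟨hn, fun _ _ => rfl, rfl⟩)
  have hdim := (Submodule.finrank_mono hK).trans finrank_blockadeSpace_le
  refine ⟨hdim, fun hlt => Submodule.lt_of_le_of_finrank_lt_finrank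
    (hK.trans blockadeSpace_le_sector) ?_⟩
  rw [finrank_sector]
  exact hdim.trans_lt hlt

/-- Krylov dimension bound from a blockade. If the basis vector
`e_{n,s}` has no fermions at sites `≥ b` and an up spin at site `b`, and
`Q = |{m : n_m = 1}|`, then the Krylov subspace `span{H^k e_{n,s}}` of the
no-hopping breakdown model has dimension at most `binom(b−1,Q)·2^{b−1}`
(here `b−1 = b.1` sites lie strictly to the left of `b`); in particular,
whenever `binom(b−1,Q)·2^{b−1} < binom(M,Q)·2^M`, the Krylov subspace is a
proper subspace of the charge sector `W_Q`. -/
theorem blockade_krylov_bound (M : ℕ) (hM : 2 ≤ M)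
    (J : Fin (M - 1) → ℝ) (μ : Fin M → ℝ) (hz : Fin M → ℝ)
    (n s : Fin M → Bool) (b : Fin M)
    (hn : ∀ m, b ≤ m → n m = false) (hs : s b = true) :
    let H : V M →ₗ[ℂ] V M := HJop M J + Hmu M μ + ∑ m : Fin M, (hz m : ℂ) • sigz M m
    let Q : ℕ := nOcc M n
    Module.finrank ℂ
        ↥(Submodule.span ℂ (Set.range fun k : ℕ => (H ^ k) (e M (n, s))))
      ≤ Nat.choose b.1 Q * 2 ^ b.1
    ∧ (Nat.choose b.1 Q * 2 ^ b.1 < Nat.choose M Q * 2 ^ M →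
        Submodule.span ℂ (Set.range fun k : ℕ => (H ^ k) (e M (n, s))) < sector M Q) :=
  blockade_krylov_bound_general M J μ hz n s b hn hs
end
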